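/- arXiv:1308.2892 — 6 statements merged into one kernel-verified Lean document; each statement's English description precedes it below -/
import Mathlib

section
/- Let α be a type and let w, u be lists over α such that w has no duplicate elements (w.Nodup). If u is a sublist of w and u is also a sublist of the reverse of w, then u has length at most 1. -/
namespace List

theorem Nodup.eq_of_pair_sublist_of_swap_sublist {α : Type*} {a b : α} {w : List α}
    (hw : w.Nodup) (hab : [a, b] <+ w) (hba : [b, a] <+ w) : a = b := by
  induction w with
  | nil => simp at hab
  | cons x w ih =>
    rw [nodup_cons] at hw
    rw [cons_sublist_cons'] at hab hba
    rcases hab with hab | ⟨rfl, _⟩ <;> rcases hba with hba | ⟨rfl, _⟩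
    · exact ih hw.2 hab hba
    · exact absurd (hab.subset (by simp)) hw.1
    · exact absurd (hba.subset (by simp)) hw.1
    · rfl

end List

theorem sublist_of_self_and_reverse_length_le_one {α : Type*} (w u : List α)
    (hw : w.Nodup) (h1 : u.Sublist w) (h2 : u.Sublist w.reverse) :
    u.length ≤ 1 := by
  match u, h1, h2 with
  | [], _, _ | [_], _, _ => simp
  | a :: b :: t, h1, h2 =>
    have hpair : [a, b].Sublist (a :: b :: t) := (t.nil_sublist.cons_cons b).cons_cons a
    have hne : a ≠ b := List.rel_of_pairwise_cons (h1.nodup hw) List.mem_cons_self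
    have hba : [b, a].Sublist w := by simpa using (hpair.trans h2).reverse
    exact absurd (hw.eq_of_pair_sublist_of_swap_sublist (hpair.trans h1) hba) hne
end

section
/- Let α be a type with decidable equality, and let w be a list over α with no duplicate elements (w.Nodup). Then for every list u over α, u is a sublist of w if and only if every element of u occurs in w and every two consecutive elements a, b of u satisfy that the index of the first occurrence of a in w is strictly less than the index of the first occurrence of b in w (i.e., u satisfies List.Chain' for the relation fun a b => w.indexOf a < w.indexOf b). -/
/-!
Since `w` has no duplicates, `w` itself is strictly increasing for the order `a ↦ w.idxOf a`, and so
is every sublist of `w`. Conversely, a list that is strictly increasing for that order has no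
duplicates, so if its elements lie in `w` it is a subpermutation of `w`; and among lists sorted
by an antisymmetric relation, a subpermutation is a sublist. Transitivity of `<` lets the
consecutive-pair condition stand for the all-pairs one.
-/

namespace List

variable {α : Type*}

theorem Nodup.pairwise_idxOf_lt [DecidableEq α] {w : List α} (hw : w.Nodup) :
    w.Pairwise (fun a b => w.idxOf a < w.idxOf b) := by
  rw [pairwise_iff_getElem]
  intro i j hi hj hij
  rwa [hw.idxOf_getElem i hi, hw.idxOf_getElem j hj]

theorem sublist_of_subset_of_pairwise_lt {β : Type*} [Preorder β] (f : α → β) {u w : List α}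
    (hsub : u ⊆ w) (hu : u.Pairwise (fun a b => f a < f b))
    (hw : w.Pairwise (fun a b => f a < f b)) : u <+ w :=
  haveI : Std.Irrefl (fun a b => f a < f b) := ⟨fun a => lt_irrefl (f a)⟩
  haveI : Std.Antisymm (fun a b => f a < f b) := ⟨fun _ _ hab hba => absurd hab hba.not_gt⟩
  sublist_of_subperm_of_pairwise (hu.nodup.subperm hsub) hu hw

theorem isChain_lt_iff_pairwise {β : Type*} [Preorder β] (f : α → β) {u : List α} :
    u.IsChain (fun a b => f a < f b) ↔ u.Pairwise (fun a b => f a < f b) :=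
  haveI : Trans (fun a b => f a < f b) (fun a b => f a < f b) (fun a b => f a < f b) :=
    ⟨lt_trans⟩
  isChain_iff_pairwise

end List

theorem sublist_iff_mem_and_chain'_indexOf_lt {α : Type*} [DecidableEq α]
    (w : List α) (hw : w.Nodup) (u : List α) :
    u.Sublist w ↔
      (∀ a ∈ u, a ∈ w) ∧ u.Chain' (fun a b => w.idxOf a < w.idxOf b) := by
  rw [List.Chain', List.isChain_lt_iff_pairwise]
  constructor
  · intro h
    exact ⟨h.subset, hw.pairwise_idxOf_lt.sublist h⟩
  · rintro ⟨hmem, hu⟩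
    exact List.sublist_of_subset_of_pairwise_lt w.idxOf hmem hu hw.pairwise_idxOf_lt
end

section
/- Consider a threshold pebble game given by a finite type V, an edge relation E : V → V → Prop whose transitive closure is irreflexive, and a threshold function t : V → ℕ with t v ≥ 1 for every vertex v. Let X : ℕ → Finset V be a legal play, i.e., for every i, every vertex of X (i+1) can be pebbled after X i. If X n is nonempty, then n < Fintype.card V. -/
/-!
Since thresholds are positive, every vertex pebbled at step `i + 1` has an in-neighbour pebbled
at step `i`. Its set of strict ancestors strictly contains that of the in-neighbour (acyclicity),
so a vertex pebbled at step `n` has at least `n` strict ancestors; not being its own ancestor, it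
has fewer than `|V|` of them.
-/

open Relation

namespace ThresholdPebbleGame

variable {V : Type*} {E : V → V → Prop}

variable (E) in
def ancestors (v : V) : Set V := {u | TransGen E u v}

variable [Finite V] [Std.Irrefl (TransGen E)]

theorem ncard_ancestors_lt_card (v : V) : (ancestors E v).ncard < Nat.card V :=
  Set.ncard_lt_card fun h => irrefl v (h.symm ▸ Set.mem_univ v : v ∈ ancestors E v)

theorem ncard_ancestors_lt_of_rel {p v : V} (h : E p v) :
    (ancestors E p).ncard < (ancestors E v).ncard :=
  Set.ncard_lt_ncard <| Set.ssubset_iff_subset_ne.2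
    ⟨fun _ hu => TransGen.tail hu h,
      fun heq => irrefl p (heq ▸ TransGen.single h : p ∈ ancestors E p)⟩

theorem le_ncard_ancestors_of_mem {X : ℕ → Set V}
    (hX : ∀ i, ∀ v ∈ X (i + 1), ∃ p ∈ X i, E p v) {n : ℕ} {v : V} (hv : v ∈ X n) :
    n ≤ (ancestors E v).ncard := by
  induction n generalizing v with
  | zero => exact Nat.zero_le _
  | succ n ih =>
    obtain ⟨p, hp, hpv⟩ := hX n v hv
    exact (ih hp).trans_lt (ncard_ancestors_lt_of_rel hpv)

end ThresholdPebbleGame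

open ThresholdPebbleGame in
theorem tpg_dag_play_length_lt_card {V : Type*} [Fintype V]
    (E : V → V → Prop) (hE : Irreflexive (Relation.TransGen E))
    (t : V → ℕ) (ht : ∀ v, 1 ≤ t v)
    (X : ℕ → Finset V)
    (hX : ∀ i, ∀ v ∈ X (i + 1), t v ≤ Set.ncard {p | p ∈ X i ∧ E p v})
    (n : ℕ) (hn : (X n).Nonempty) :
    n < Fintype.card V := by
  have : Std.Irrefl (TransGen E) := ⟨hE⟩
  have hpred : ∀ i, ∀ v ∈ X (i + 1), ∃ p ∈ X i, E p v := fun i v hv =>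
    Set.nonempty_of_ncard_ne_zero (Nat.one_le_iff_ne_zero.1 ((ht v).trans (hX i v hv)))
  obtain ⟨v, hv⟩ := hn
  calc n ≤ (ancestors E v).ncard := le_ncard_ancestors_of_mem (X := (X ·)) hpred hv
    _ < Nat.card V := ncard_ancestors_lt_card v
    _ = Fintype.card V := Nat.card_eq_fintype_card
end

section
/- Consider a threshold pebble game given by a finite type V with decidable equality, an edge relation E : V → V → Prop (with decidable instances) whose transitive closure is irreflexive, and a threshold function t : V → ℕ with t v ≥ 1 for every vertex v. Define the maximum-step function step : Finset V → Finset V by step X = the set of all vertices v such that v can be pebbled after X. Then for every pebbling X, the (Fintype.card V)-fold iterate of step applied to X is the empty set. -/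
/-!
A vertex pebbled in round `k + 1` has a predecessor pebbled in round `k`, because every threshold
is positive. Hence a vertex pebbled after `n` rounds ends an `E`-path through `n + 1` vertices,
which are distinct when `E` is acyclic; so `n < card V`.
-/

open Finset Relation

namespace List

theorem IsChain.nodup_of_irreflexive_transGen {α : Type*} {R : α → α → Prop}
    (hR : Irreflexive (TransGen R)) {l : List α} (hl : l.IsChain R) : l.Nodup := by
  refine (hl.imp fun _ _ => TransGen.single).pairwise.imp ?_
  rintro a _ hab rfl
  exact hR a hab

end List

section ThresholdPebbleGame

variable {V : Type*} (E : V → V → Prop)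

def HasPredecessorIn (step : Finset V → Finset V) : Prop :=
  ∀ X v, v ∈ step X → ∃ p ∈ X, E p v

theorem exists_isChain_of_mem_iterate {step : Finset V → Finset V}
    (hstep : HasPredecessorIn E step) {X : Finset V} {v : V} : ∀ {k : ℕ}, v ∈ step^[k] X →
      ∃ l : List V, (v :: l).IsChain (flip E) ∧ l.length = k
  | 0, _ => ⟨[], List.isChain_singleton v, rfl⟩
  | k + 1, hv => by
    rw [Function.iterate_succ_apply'] at hv
    obtain ⟨p, hp, hpv⟩ := hstep _ v hv
    obtain ⟨l, hl, hlen⟩ := exists_isChain_of_mem_iterate hstep hp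
    exact ⟨p :: l, List.isChain_cons_cons.mpr ⟨hpv, hl⟩, by simp [hlen]⟩

theorem iterate_eq_empty_of_card_le [Fintype V] (hE : Irreflexive (TransGen E))
    {step : Finset V → Finset V} (hstep : HasPredecessorIn E step) {n : ℕ}
    (hn : Fintype.card V ≤ n) (X : Finset V) : step^[n] X = ∅ := by
  refine eq_empty_of_forall_notMem fun v hv => ?_
  obtain ⟨l, hl, hlen⟩ := exists_isChain_of_mem_iterate E hstep hv
  have hE' : Irreflexive (TransGen (flip E)) := fun a h => hE a (transGen_swap.mp h)
  have := (hl.nodup_of_irreflexive_transGen hE').length_le_card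
  simp only [List.length_cons] at this
  omega

variable [DecidableRel E] (t : V → ℕ)

def maxNextPebbling [Fintype V] (X : Finset V) : Finset V :=
  univ.filter fun v => t v ≤ (X.filter fun p => E p v).card

theorem hasPredecessorIn_maxNextPebbling [Fintype V] (ht : ∀ v, 1 ≤ t v) :
    HasPredecessorIn E (maxNextPebbling E t) := by
  intro X v hv
  obtain ⟨p, hp⟩ := card_pos.mp ((ht v).trans (mem_filter.mp hv).2)
  exact ⟨p, mem_filter.mp hp⟩

end ThresholdPebbleGame

theorem tpg_max_step_iterate_card_eq_empty_general {V : Type*} [Fintype V]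
    (E : V → V → Prop) [DecidableRel E]
    (hE : Irreflexive (Relation.TransGen E))
    (t : V → ℕ) (ht : ∀ v, 1 ≤ t v)
    (X : Finset V) :
    (fun Y : Finset V =>
        Finset.univ.filter (fun v => t v ≤ (Y.filter (fun p => E p v)).card))^[Fintype.card V]
      X = ∅ :=
  iterate_eq_empty_of_card_le E hE (hasPredecessorIn_maxNextPebbling E t ht) le_rfl X

theorem tpg_max_step_iterate_card_eq_empty {V : Type*} [Fintype V] [DecidableEq V]
    (E : V → V → Prop) [DecidableRel E]
    (hE : Irreflexive (Relation.TransGen E))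
    (t : V → ℕ) (ht : ∀ v, 1 ≤ t v)
    (X : Finset V) :
    (fun Y : Finset V =>
        Finset.univ.filter (fun v => t v ≤ (Y.filter (fun p => E p v)).card))^[Fintype.card V]
      X = ∅ :=
  tpg_max_step_iterate_card_eq_empty_general E hE t ht X
end

section
/- Let V be a type, G : V → V → Prop a directed graph, and k ≥ 1 a natural number. Define a directed graph G' on the type V ⊕ (V × V × Fin k) with exactly the following edges: for every pair (a,b) : V × V, an edge from Sum.inl a to Sum.inr (a,b,0); for every pair (a,b) and every i : Fin k with i+1 < k, an edge from Sum.inr (a,b,i) to Sum.inr (a,b,i+1); and, whenever G a b holds, an edge from Sum.inr (a,b,k-1) to Sum.inl b. Then for all a, b : V, there is a G'-path from Sum.inl a to Sum.inl b (i.e., Relation.ReflTransGen G' (Sum.inl a) (Sum.inl b)) if and only if there is a G-path from a to b (Relation.ReflTransGen G a b). -/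
/-- The graph obtained from `G` by replacing each potential edge `(a, b)` with a
chain of `k` new vertices `(a, b, 0), …, (a, b, k-1)` attached to `a`, where the
final edge from `(a, b, k-1)` into `b` is present exactly when `G a b` holds. -/
def ChainGraph {V : Type*} (G : V → V → Prop) (k : ℕ) (hk : 1 ≤ k) :
    (V ⊕ V × V × Fin k) → (V ⊕ V × V × Fin k) → Prop :=
  fun x y =>
    (∃ a b : V, x = Sum.inl a ∧ y = Sum.inr (a, b, (⟨0, hk⟩ : Fin k))) ∨
    (∃ a b : V, ∃ i : Fin k, ∃ h : (i : ℕ) + 1 < k,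
        x = Sum.inr (a, b, i) ∧ y = Sum.inr (a, b, ⟨(i : ℕ) + 1, h⟩)) ∨
    (∃ a b : V, G a b ∧ x = Sum.inr (a, b, (⟨k - 1, by omega⟩ : Fin k)) ∧
        y = Sum.inl b)

namespace ChainGraph

variable {V : Type*} {G : V → V → Prop} {k : ℕ} {hk : 1 ≤ k}

def origin : V ⊕ V × V × Fin k → V :=
  Sum.elim id Prod.fst

theorem reflTransGen_origin {x y : V ⊕ V × V × Fin k} (h : ChainGraph G k hk x y) :
    Relation.ReflTransGen G (origin x) (origin y) := by
  rcases h with ⟨a, b, rfl, rfl⟩ | ⟨a, b, i, -, rfl, rfl⟩ | ⟨a, b, hab, rfl, rfl⟩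
  · exact .refl
  · exact .refl
  · exact .single hab

theorem reflTransGen_inl_inr (a b : V) (j : ℕ) (hj : j < k) :
    Relation.ReflTransGen (ChainGraph G k hk) (Sum.inl a) (Sum.inr (a, b, ⟨j, hj⟩)) := by
  induction j with
  | zero => exact .single (Or.inl ⟨a, b, rfl, rfl⟩)
  | succ j ih =>
    exact (ih (by omega)).tail (Or.inr (Or.inl ⟨a, b, ⟨j, by omega⟩, hj, rfl, rfl⟩))

theorem reflTransGen_inl_of_adj {a b : V} (hab : G a b) :
    Relation.ReflTransGen (ChainGraph G k hk) (Sum.inl a) (Sum.inl b) :=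
  (reflTransGen_inl_inr a b (k - 1) (by omega)).tail (Or.inr (Or.inr ⟨a, b, hab, rfl, rfl⟩))

end ChainGraph

theorem chainGraph_reachability {V : Type*} (G : V → V → Prop) (k : ℕ)
    (hk : 1 ≤ k) (a b : V) :
    Relation.ReflTransGen (ChainGraph G k hk) (Sum.inl a) (Sum.inl b) ↔
      Relation.ReflTransGen G a b :=
  ⟨fun h => h.lift' ChainGraph.origin fun _ _ => ChainGraph.reflTransGen_origin,
    fun h => h.lift' Sum.inl fun _ _ => ChainGraph.reflTransGen_inl_of_adj⟩
end

section
/- Let Q be a type, k ≥ 1 a natural number, and δ : Option Q → Q → Option Q → Q a local transition rule (where none represents a missing neighbor at the boundary). For a configuration c : Fin k → Q define the parallel step P c : Fin k → Q by P c i = δ (left c i) (c i) (right c i), where left c i = some (c (i-1)) if i > 0 and none if i = 0, and right c i = some (c (i+1)) if i < k-1 and none if i = k-1. Fix any x : Fin k → Q and define the sequential pass g : ℕ → (Fin k → Q × Q) by: g 0 is the configuration i ↦ (x i, c i); and g (m+1) is obtained from g m by (if m < k) replacing the pair at cell m by (snd (g m m), δ L (snd (g m m)) R), where L is some of the FIRST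 component of the pair of cell m-1 under g m (or none if m = 0) and R is some of the SECOND component of the pair of cell m+1 under g m (or none if m = k-1); for m ≥ k, g (m+1) = g m. Then for every i : Fin k, g k i = (c i, P c i). -/
/-- The state of the left neighbor of cell `i` (or `none` if `i = 0`). -/
def caLeft {Q : Type*} {k : ℕ} (c : Fin k → Q) (i : Fin k) : Option Q :=
  if h : 0 < (i : ℕ) then some (c ⟨(i : ℕ) - 1, by omega⟩) else none

/-- The state of the right neighbor of cell `i` (or `none` if `i = k - 1`). -/
def caRight {Q : Type*} {k : ℕ} (c : Fin k → Q) (i : Fin k) : Option Q :=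
  if h : (i : ℕ) + 1 < k then some (c ⟨(i : ℕ) + 1, h⟩) else none

/-- One parallel step of the cellular automaton with local rule `δ`. -/
def parStep {Q : Type*} {k : ℕ} (δ : Option Q → Q → Option Q → Q)
    (c : Fin k → Q) : Fin k → Q :=
  fun i => δ (caLeft c i) (c i) (caRight c i)

/-- One minor step of the sequential pass: at time `m < k` cell `m` updates its
pair `(previous, current)` to `(current, δ L current R)`, where `L` is the
*first* (previous-state) component of the pair of cell `m - 1` (or `none` if
`m = 0`) and `R` is the *second* (current-state) component of the pair of cell
`m + 1` (or `none` if `m = k - 1`); for `m ≥ k` nothing happens. -/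
def seqStep {Q : Type*} {k : ℕ} (δ : Option Q → Q → Option Q → Q) (m : ℕ)
    (f : Fin k → Q × Q) : Fin k → Q × Q :=
  if hm : m < k then
    Function.update f ⟨m, hm⟩
      ((f ⟨m, hm⟩).2,
        δ (if h0 : 0 < m then some ((f ⟨m - 1, by omega⟩).1) else none)
          ((f ⟨m, hm⟩).2)
          (if h1 : m + 1 < k then some ((f ⟨m + 1, h1⟩).2) else none))
  else f

/-- The sequential pass: iterate the minor steps starting from `f0`. -/
def seqPass {Q : Type*} {k : ℕ} (δ : Option Q → Q → Option Q → Q)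
    (f0 : Fin k → Q × Q) : ℕ → Fin k → Q × Q
  | 0 => f0
  | m + 1 => seqStep δ m (seqPass δ f0 m)

/-!
After `m` minor steps of the pass, the cells `j < m` hold `(c j, parStep δ c j)` and the
cells `j ≥ m` still hold `(x j, c j)`. Cell `m` therefore finds the old state of its left
neighbour in that neighbour's first component and the old state of its right neighbour in
that neighbour's second component, which is exactly what the parallel step reads.
-/

section

variable {Q : Type*} {k : ℕ}

theorem caLeft_congr {c c' : Fin k → Q} {i : Fin k} (h : ∀ j < i, c j = c' j) :
    caLeft c i = caLeft c' i := by
  unfold caLeft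
  split_ifs with hi
  · rw [h _ (Fin.lt_def.2 (by simp only; omega))]
  · rfl

theorem caRight_congr {c c' : Fin k → Q} {i : Fin k} (h : ∀ j > i, c j = c' j) :
    caRight c i = caRight c' i := by
  unfold caRight
  split_ifs with hi
  · rw [h _ (Fin.lt_def.2 (by simp only; omega))]
  · rfl

theorem seqStep_apply_self (δ : Option Q → Q → Option Q → Q) (f : Fin k → Q × Q) {m : ℕ}
    (hm : m < k) :
    seqStep δ m f ⟨m, hm⟩ = ((f ⟨m, hm⟩).2,
      δ (caLeft (fun j => (f j).1) ⟨m, hm⟩) (f ⟨m, hm⟩).2 (caRight (fun j => (f j).2) ⟨m, hm⟩)) := by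
  rw [seqStep, dif_pos hm, Function.update_self]
  rfl

theorem seqStep_apply_of_ne (δ : Option Q → Q → Option Q → Q) (f : Fin k → Q × Q) {m : ℕ}
    {j : Fin k} (hj : (j : ℕ) ≠ m) : seqStep δ m f j = f j := by
  by_cases hm : m < k
  · rw [seqStep, dif_pos hm]
    exact Function.update_of_ne (fun h => hj (congrArg Fin.val h)) _ _
  · rw [seqStep, dif_neg hm]

def updatedBelow (δ : Option Q → Q → Option Q → Q) (c x : Fin k → Q) (m : ℕ) :
    Fin k → Q × Q :=
  fun j => if (j : ℕ) < m then (c j, parStep δ c j) else (x j, c j)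

theorem seqStep_updatedBelow (δ : Option Q → Q → Option Q → Q) (c x : Fin k → Q) {m : ℕ}
    (hm : m < k) : seqStep δ m (updatedBelow δ c x m) = updatedBelow δ c x (m + 1) := by
  funext j
  by_cases hj : (j : ℕ) = m
  · obtain rfl : j = ⟨m, hm⟩ := Fin.ext hj
    have hL : caLeft (fun j => (updatedBelow δ c x m j).1) ⟨m, hm⟩ = caLeft c ⟨m, hm⟩ :=
      caLeft_congr fun j hj => by simp [updatedBelow, Fin.lt_def.1 hj]
    have hR : caRight (fun j => (updatedBelow δ c x m j).2) ⟨m, hm⟩ = caRight c ⟨m, hm⟩ :=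
      caRight_congr fun j hj => by simp [updatedBelow, (Fin.lt_def.1 hj).not_gt]
    rw [seqStep_apply_self, hL, hR]
    simp [updatedBelow, parStep]
  · have hlt : (j : ℕ) < m ↔ (j : ℕ) < m + 1 := by omega
    rw [seqStep_apply_of_ne δ _ hj]
    simp only [updatedBelow, hlt]

theorem seqPass_eq_updatedBelow (δ : Option Q → Q → Option Q → Q) (c x : Fin k → Q) {m : ℕ}
    (hm : m ≤ k) : seqPass δ (fun i => (x i, c i)) m = updatedBelow δ c x m := by
  induction m with
  | zero => funext j; simp [seqPass, updatedBelow]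
  | succ m ih => rw [seqPass, ih (by omega), seqStep_updatedBelow δ c x (by omega)]

end

theorem seqPass_eq_parStep_general {Q : Type*} (k : ℕ)
    (δ : Option Q → Q → Option Q → Q) (c : Fin k → Q) (x : Fin k → Q)
    (i : Fin k) :
    seqPass δ (fun i => (x i, c i)) k i = (c i, parStep δ c i) := by
  rw [seqPass_eq_updatedBelow δ c x le_rfl]
  exact if_pos i.isLt

theorem seqPass_eq_parStep {Q : Type*} (k : ℕ) (hk : 1 ≤ k)
    (δ : Option Q → Q → Option Q → Q) (c : Fin k → Q) (x : Fin k → Q)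
    (i : Fin k) :
    seqPass δ (fun i => (x i, c i)) k i = (c i, parStep δ c i) :=
  seqPass_eq_parStep_general k δ c x i
end
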